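/- Let (X, μ) be a measure space, let N ≥ 1, let M ≥ 0, and let (w_n) be measurable functions with 0 ≤ w_n(x) ≤ M for a.e. x and w_n → w almost everywhere. Let (v_n) ⊂ L²(μ; ℝ^N) converge weakly in L²(μ; ℝ^N) to v, in the sense that ∫_X v_n · g dμ → ∫_X v · g dμ for every g ∈ L²(μ; ℝ^N). Then liminf_{n→∞} ∫_X w_n |v_n|² dμ ≥ ∫_X w |v|² dμ. -/

import Mathlib

/-!
Expanding `0 ≤ wₙ |vₙ - v|²` gives `2 wₙ ⟪vₙ, v⟫ - wₙ |v|² ≤ wₙ |vₙ|²`. By dominated convergence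
`wₙ v → w v` strongly in `L²`, and pairing a weakly convergent sequence with a strongly convergent
one gives a convergent sequence, so the integral of the left-hand side tends to
`2 ∫ w |v|² - ∫ w |v|² = ∫ w |v|²`. A weakly convergent sequence is bounded (Banach–Steinhaus),
so `∫ wₙ |vₙ|²` is bounded above and its `liminf` in `ℝ` is not a junk value.
-/

open MeasureTheory Filter Topology
open scoped RealInnerProductSpace InnerProductSpace ENNReal

theorem le_liminf_of_tendsto_of_le {ι β : Type*} [ConditionallyCompleteLinearOrder β]
    [TopologicalSpace β] [OrderTopology β] {l : Filter ι} [l.NeBot] {a u : ι → β} {L : β}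
    (ha : Tendsto a l (𝓝 L)) (hau : ∀ᶠ i in l, a i ≤ u i) (hu : IsBoundedUnder (· ≤ ·) l u) :
    L ≤ liminf u l :=
  ha.liminf_eq ▸ liminf_le_liminf hau ha.isBoundedUnder_ge hu.isCoboundedUnder_flip

section WeakConvergence

variable {𝕜 E : Type*} [RCLike 𝕜] [NormedAddCommGroup E] [InnerProductSpace 𝕜 E] [CompleteSpace E]
  {F : ℕ → E} {F₀ : E}

theorem exists_norm_le_of_forall_tendsto_inner
    (hF : ∀ g, Tendsto (fun n => ⟪F n, g⟫_𝕜) atTop (𝓝 ⟪F₀, g⟫_𝕜)) : ∃ C, ∀ n, ‖F n‖ ≤ C := by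
  obtain ⟨C, hC⟩ := banach_steinhaus (g := fun n => innerSL 𝕜 (F n)) fun g => by
    obtain ⟨C, hC⟩ := (hF g).norm.bddAbove_range
    exact ⟨C, fun n => hC ⟨n, rfl⟩⟩
  exact ⟨C, fun n => (innerSL_apply_norm 𝕜 (F n)).symm.trans_le (hC n)⟩

theorem tendsto_inner_of_forall_tendsto_inner_of_tendsto {G : ℕ → E} {G₀ : E}
    (hF : ∀ g, Tendsto (fun n => ⟪F n, g⟫_𝕜) atTop (𝓝 ⟪F₀, g⟫_𝕜)) (hG : Tendsto G atTop (𝓝 G₀)) :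
    Tendsto (fun n => ⟪F n, G n⟫_𝕜) atTop (𝓝 ⟪F₀, G₀⟫_𝕜) := by
  obtain ⟨C, hC⟩ := exists_norm_le_of_forall_tendsto_inner hF
  have hsmall : Tendsto (fun n => ⟪F n, G n - G₀⟫_𝕜) atTop (𝓝 0) := by
    refine squeeze_zero_norm (fun n => (norm_inner_le_norm _ _).trans
      (mul_le_mul_of_nonneg_right (hC n) (norm_nonneg _))) ?_
    simpa using (tendsto_iff_norm_sub_tendsto_zero.1 hG).const_mul C
  simpa [inner_sub_right] using (hF G₀).add hsmall

end WeakConvergence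

section

variable {α E : Type*} [MeasurableSpace α] {μ : Measure α}

theorem ae_mem_of_tendsto_ae {ι β : Type*} [Countable ι] [TopologicalSpace β] {l : Filter ι}
    [l.NeBot] {f : ι → α → β} {g : α → β} {s : Set β} (hs : IsClosed s)
    (hf : ∀ i, ∀ᵐ x ∂μ, f i x ∈ s) (hlim : ∀ᵐ x ∂μ, Tendsto (fun i => f i x) l (𝓝 (g x))) :
    ∀ᵐ x ∂μ, g x ∈ s := by
  filter_upwards [ae_all_iff.2 hf, hlim] with x hfx hx
  exact hs.mem_of_tendsto hx (.of_forall hfx)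

theorem tendsto_integral_mul_of_tendsto_ae_of_norm_le {f : α → ℝ} (hf : Integrable f μ)
    {c : ℕ → α → ℝ} {c₀ : α → ℝ} {M : ℝ} (hc : ∀ n, AEStronglyMeasurable (c n) μ)
    (hcM : ∀ n, ∀ᵐ x ∂μ, ‖c n x‖ ≤ M) (hlim : ∀ᵐ x ∂μ, Tendsto (fun n => c n x) atTop (𝓝 (c₀ x))) :
    Tendsto (fun n => ∫ x, c n x * f x ∂μ) atTop (𝓝 (∫ x, c₀ x * f x ∂μ)) := by
  refine tendsto_integral_of_dominated_convergence (fun x => M * ‖f x‖)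
    (fun n => (hc n).mul hf.1) (hf.norm.const_mul M) (fun n => ?_)
    (hlim.mono fun x hx => hx.mul_const _)
  filter_upwards [hcM n] with x hx
  rw [norm_mul]
  exact mul_le_mul_of_nonneg_right hx (norm_nonneg _)

theorem MeasureTheory.L2.inner_toLp_toLp {𝕜 : Type*} [RCLike 𝕜] [NormedAddCommGroup E]
    [InnerProductSpace 𝕜 E] {f g : α → E} (hf : MemLp f 2 μ) (hg : MemLp g 2 μ) :
    ⟪hf.toLp f, hg.toLp g⟫_𝕜 = ∫ x, ⟪f x, g x⟫_𝕜 ∂μ := by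
  rw [L2.inner_def]
  refine integral_congr_ae ?_
  filter_upwards [hf.coeFn_toLp, hg.coeFn_toLp] with x hfx hgx
  rw [hfx, hgx]

theorem MeasureTheory.MemLp.integrable_inner {𝕜 : Type*} [RCLike 𝕜] [NormedAddCommGroup E]
    [InnerProductSpace 𝕜 E] {f g : α → E} (hf : MemLp f 2 μ) (hg : MemLp g 2 μ) :
    Integrable (fun x => ⟪f x, g x⟫_𝕜) μ :=
  (L2.integrable_inner (𝕜 := 𝕜) (hf.toLp f) (hg.toLp g)).congr <| by
    filter_upwards [hf.coeFn_toLp, hg.coeFn_toLp] with x hfx hgx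
    rw [hfx, hgx]

variable [NormedAddCommGroup E] [InnerProductSpace ℝ E]

theorem MeasureTheory.L2.norm_toLp_sq {f : α → E} (hf : MemLp f 2 μ) :
    ‖hf.toLp f‖ ^ 2 = ∫ x, ‖f x‖ ^ 2 ∂μ := by
  simp only [← real_inner_self_eq_norm_sq, L2.inner_toLp_toLp]

theorem MeasureTheory.L2.tendsto_toLp_of_tendsto_integral_norm_sub_sq {f : ℕ → α → E} {f₀ : α → E}
    (hf : ∀ n, MemLp (f n) 2 μ) (hf₀ : MemLp f₀ 2 μ)
    (h : Tendsto (fun n => ∫ x, ‖f n x - f₀ x‖ ^ 2 ∂μ) atTop (𝓝 0)) :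
    Tendsto (fun n => (hf n).toLp (f n)) atTop (𝓝 (hf₀.toLp f₀)) := by
  refine tendsto_iff_norm_sub_tendsto_zero.2 ?_
  have hnorm : ∀ n, ‖(hf n).toLp (f n) - hf₀.toLp f₀‖ = √(∫ x, ‖f n x - f₀ x‖ ^ 2 ∂μ) := fun n => by
    rw [← MemLp.toLp_sub, ← L2.norm_toLp_sq, Real.sqrt_sq (norm_nonneg _)]
    rfl
  simpa [hnorm] using h.sqrt

theorem integral_mul_norm_sq_le_mul_norm_toLp_sq {f : α → E} {c : α → ℝ} {M : ℝ} (hf : MemLp f 2 μ)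
    (hc : AEStronglyMeasurable c μ) (hcM : ∀ᵐ x ∂μ, ‖c x‖ ≤ M) :
    ∫ x, c x * ‖f x‖ ^ 2 ∂μ ≤ M * ‖hf.toLp f‖ ^ 2 := by
  have hf2 : Integrable (fun x => ‖f x‖ ^ 2) μ := hf.integrable_norm_pow two_ne_zero
  rw [L2.norm_toLp_sq, ← integral_const_mul]
  refine integral_mono_ae (hf2.bdd_mul hc hcM) (hf2.const_mul M) ?_
  filter_upwards [hcM] with x hx
  exact mul_le_mul_of_nonneg_right ((le_abs_self _).trans hx) (sq_nonneg _)

theorem tendsto_integral_norm_smul_sub_smul_sq {f : α → E} (hf : MemLp f 2 μ)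
    {c : ℕ → α → ℝ} {c₀ : α → ℝ} {M : ℝ} (hc : ∀ n, AEStronglyMeasurable (c n) μ)
    (hcM : ∀ n, ∀ᵐ x ∂μ, ‖c n x‖ ≤ M) (hc₀M : ∀ᵐ x ∂μ, ‖c₀ x‖ ≤ M)
    (hlim : ∀ᵐ x ∂μ, Tendsto (fun n => c n x) atTop (𝓝 (c₀ x))) :
    Tendsto (fun n => ∫ x, ‖c n x • f x - c₀ x • f x‖ ^ 2 ∂μ) atTop (𝓝 0) := by
  have hc₀ : AEStronglyMeasurable c₀ μ := aestronglyMeasurable_of_tendsto_ae atTop hc hlim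
  have key := tendsto_integral_mul_of_tendsto_ae_of_norm_le (c₀ := 0) (M := (2 * M) ^ 2)
    (hf.integrable_norm_pow two_ne_zero) (c := fun n x => (c n x - c₀ x) ^ 2)
    (fun n => ((hc n).sub hc₀).pow 2) (fun n => ?_) ?_
  · simpa [← sub_smul, norm_smul, mul_pow] using key
  · filter_upwards [hcM n, hc₀M] with x hx hx₀
    rw [Real.norm_eq_abs] at hx hx₀ ⊢
    rw [abs_pow, abs_sub_comm]
    exact pow_le_pow_left₀ (abs_nonneg _) ((abs_sub _ _).trans (by linarith)) 2
  · filter_upwards [hlim] with x hx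
    simpa using (hx.sub_const (c₀ x)).pow 2

theorem two_mul_inner_smul_sub_inner_smul_le {x y : E} {c : ℝ} (hc : 0 ≤ c) :
    2 * ⟪x, c • y⟫ - ⟪y, c • y⟫ ≤ c * ‖x‖ ^ 2 := by
  have h := mul_nonneg hc (sq_nonneg ‖x - y‖)
  rw [norm_sub_sq_real] at h
  rw [real_inner_smul_right, real_inner_smul_right, real_inner_self_eq_norm_sq]
  linarith

theorem two_mul_integral_inner_smul_sub_le {f g : α → E} {c : α → ℝ} (hf : MemLp f 2 μ)
    (hg : MemLp g 2 μ) (hc : MemLp c ∞ μ) (hc_nonneg : ∀ᵐ x ∂μ, 0 ≤ c x) :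
    2 * ∫ x, ⟪f x, c x • g x⟫ ∂μ - ∫ x, ⟪g x, c x • g x⟫ ∂μ ≤ ∫ x, c x * ‖f x‖ ^ 2 ∂μ := by
  have hcg : MemLp (c • g) 2 μ := hg.smul hc
  rw [← integral_const_mul, ← integral_sub]
  · refine integral_mono_ae ?_ ?_
      (hc_nonneg.mono fun x hx => two_mul_inner_smul_sub_inner_smul_le hx)
    · exact ((hf.integrable_inner hcg).const_mul 2).sub (hg.integrable_inner hcg)
    · exact hc.integrable_mul (q := 1) <|
        memLp_one_iff_integrable.2 (hf.integrable_norm_pow two_ne_zero)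
  · exact (hf.integrable_inner hcg).const_mul 2
  · exact hg.integrable_inner hcg

end

theorem weighted_weak_lower_semicontinuity_general {X : Type*} [MeasurableSpace X] (μ : Measure X)
    (N : ℕ) (M : ℝ) (hM : 0 ≤ M)
    (w : ℕ → X → ℝ) (w₀ : X → ℝ)
    (hwmeas : ∀ n, Measurable (w n))
    (hwbdd : ∀ n, ∀ᵐ x ∂μ, 0 ≤ w n x ∧ w n x ≤ M)
    (hwae : ∀ᵐ x ∂μ, Tendsto (fun n => w n x) atTop (nhds (w₀ x)))
    (v : ℕ → X → EuclideanSpace ℝ (Fin N)) (v₀ : X → EuclideanSpace ℝ (Fin N))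
    (hv : ∀ n, MemLp (v n) 2 μ) (hv₀ : MemLp v₀ 2 μ)
    (hweak : ∀ g : X → EuclideanSpace ℝ (Fin N), MemLp g 2 μ →
      Tendsto (fun n => ∫ x, ⟪v n x, g x⟫ ∂μ) atTop (nhds (∫ x, ⟪v₀ x, g x⟫ ∂μ))) :
    ∫ x, w₀ x * ‖v₀ x‖ ^ 2 ∂μ ≤ atTop.liminf (fun n => ∫ x, w n x * ‖v n x‖ ^ 2 ∂μ) := by
  have hwm (n : ℕ) : AEStronglyMeasurable (w n) μ := (hwmeas n).aestronglyMeasurable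
  have hwM (n : ℕ) : ∀ᵐ x ∂μ, ‖w n x‖ ≤ M :=
    (hwbdd n).mono fun x hx => abs_le.2 ⟨by linarith [hx.1], hx.2⟩
  have hw₀M : ∀ᵐ x ∂μ, ‖w₀ x‖ ≤ M := by
    simpa using ae_mem_of_tendsto_ae (Metric.isClosed_closedBall (x := 0) (ε := M))
      (fun n => by simpa using hwM n) hwae
  have hw (n : ℕ) : MemLp (w n) ∞ μ := memLp_top_of_bound (hwm n) M (hwM n)
  have hw₀ : MemLp w₀ ∞ μ :=
    memLp_top_of_bound (aestronglyMeasurable_of_tendsto_ae atTop hwm hwae) M hw₀M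
  set F : ℕ → Lp (EuclideanSpace ℝ (Fin N)) 2 μ := fun n => (hv n).toLp (v n)
  set F₀ := hv₀.toLp v₀
  set G : ℕ → Lp (EuclideanSpace ℝ (Fin N)) 2 μ := fun n => (hv₀.smul (r := 2) (hw n)).toLp _
  set G₀ := (hv₀.smul (r := 2) hw₀).toLp _
  have hF (g : Lp (EuclideanSpace ℝ (Fin N)) 2 μ) :
      Tendsto (fun n => ⟪F n, g⟫) atTop (𝓝 ⟪F₀, g⟫) := by
    rw [← Lp.toLp_coeFn g (Lp.memLp g)]
    simpa only [F, F₀, L2.inner_toLp_toLp] using hweak g (Lp.memLp g)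
  have hG : Tendsto G atTop (𝓝 G₀) := L2.tendsto_toLp_of_tendsto_integral_norm_sub_sq _ _ <|
    tendsto_integral_norm_smul_sub_smul_sq hv₀ hwm hwM hw₀M hwae
  have hFG₀ : ⟪F₀, G₀⟫ = ∫ x, w₀ x * ‖v₀ x‖ ^ 2 ∂μ := by
    simp only [F₀, G₀, L2.inner_toLp_toLp, Pi.smul_apply', real_inner_smul_right,
      real_inner_self_eq_norm_sq]
  obtain ⟨C, hC⟩ := exists_norm_le_of_forall_tendsto_inner hF
  refine le_liminf_of_tendsto_of_le (a := fun n => 2 * ⟪F n, G n⟫ - ⟪F₀, G n⟫) ?_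
    (.of_forall fun n => ?_) (isBoundedUnder_of ⟨M * C ^ 2, fun n => ?_⟩)
  · have h := ((tendsto_inner_of_forall_tendsto_inner_of_tendsto hF hG).const_mul 2).sub
      ((tendsto_const_nhds (x := F₀)).inner hG)
    rwa [hFG₀, two_mul, add_sub_cancel_right] at h
  · simpa only [F, F₀, G, L2.inner_toLp_toLp, Pi.smul_apply'] using
      two_mul_integral_inner_smul_sub_le (hv n) hv₀ (hw n) ((hwbdd n).mono fun x hx => hx.1)
  · calc ∫ x, w n x * ‖v n x‖ ^ 2 ∂μ ≤ M * ‖F n‖ ^ 2 :=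
          integral_mul_norm_sq_le_mul_norm_toLp_sq (hv n) (hwm n) (hwM n)
      _ ≤ M * C ^ 2 := by gcongr; exact hC n

theorem weighted_weak_lower_semicontinuity {X : Type*} [MeasurableSpace X] (μ : Measure X)
    (N : ℕ) (hN : 1 ≤ N) (M : ℝ) (hM : 0 ≤ M)
    (w : ℕ → X → ℝ) (w₀ : X → ℝ)
    (hwmeas : ∀ n, Measurable (w n))
    (hwbdd : ∀ n, ∀ᵐ x ∂μ, 0 ≤ w n x ∧ w n x ≤ M)
    (hwae : ∀ᵐ x ∂μ, Tendsto (fun n => w n x) atTop (nhds (w₀ x)))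
    (v : ℕ → X → EuclideanSpace ℝ (Fin N)) (v₀ : X → EuclideanSpace ℝ (Fin N))
    (hv : ∀ n, MemLp (v n) 2 μ) (hv₀ : MemLp v₀ 2 μ)
    (hweak : ∀ g : X → EuclideanSpace ℝ (Fin N), MemLp g 2 μ →
      Tendsto (fun n => ∫ x, ⟪v n x, g x⟫ ∂μ) atTop (nhds (∫ x, ⟪v₀ x, g x⟫ ∂μ))) :
    ∫ x, w₀ x * ‖v₀ x‖ ^ 2 ∂μ ≤ atTop.liminf (fun n => ∫ x, w n x * ‖v n x‖ ^ 2 ∂μ) :=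
  weighted_weak_lower_semicontinuity_general μ N M hM w w₀ hwmeas hwbdd hwae v v₀ hv hv₀ hweak
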